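/- arXiv:2207.07566 — 7 statements merged into one kernel-verified Lean document; each statement's English description precedes it below -/
import Mathlib

section
/- Let $i$ and $k$ be natural numbers with $k \le i$, and let $h$ and $\ell$ be as in the context. Then $\sum_{p=0}^{k} \ell(i-p) = \sum h(r,s)$, where the sum on the right runs over all pairs of natural numbers $(r,s)$ with $i-k \le s \le i$ and $r+s \le i$; and $\sum_{p=0}^{k} \ell(p) = \sum h(r,s)$, where the sum on the right runs over all pairs of natural numbers $(r,s)$ with $r \le k$ and $r+s \le i$. -/
open Finset

/-- Steenbrink's lemma on link invariants (combinatorial core): the two sum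
identities.  Here `h` models the Deligne–Hodge numbers `h^{p,q}_i` of the link
(hence symmetric and vanishing for `p + q > i`) and `ℓ p` models
`ℓ^{p,i-p} = dim Gr_F^p H^i(L)`. -/
theorem stmt0 (i k : ℕ) (hk : k ≤ i) (h : ℕ → ℕ → ℕ)
    (hsym : ∀ p q, h p q = h q p)
    (hvan : ∀ p q, i < p + q → h p q = 0)
    (ℓ : ℕ → ℕ) (hl : ∀ p, ℓ p = ∑ q ∈ range (i + 1), h p q) :
    (∑ p ∈ range (k + 1), ℓ (i - p) =
      ∑ rs ∈ (range (i + 1) ×ˢ range (i + 1)).filter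
        (fun rs => i - k ≤ rs.2 ∧ rs.2 ≤ i ∧ rs.1 + rs.2 ≤ i), h rs.1 rs.2) ∧
    (∑ p ∈ range (k + 1), ℓ p =
      ∑ rs ∈ (range (i + 1) ×ˢ range (i + 1)).filter
        (fun rs => rs.1 ≤ k ∧ rs.1 + rs.2 ≤ i), h rs.1 rs.2) := by
  constructor
  · -- first identity
    rw [sum_filter, sum_product]
    rw [Finset.sum_comm]
    have hF : ∑ s ∈ range (i + 1), (∑ r ∈ range (i + 1),
        if i - k ≤ s ∧ s ≤ i ∧ r + s ≤ i then h r s else 0)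
        = ∑ s ∈ (range (i + 1)).filter (fun s => i - k ≤ s),
          (∑ r ∈ range (i + 1), if i - k ≤ s ∧ s ≤ i ∧ r + s ≤ i then h r s else 0) := by
      refine (Finset.sum_filter_of_ne fun s _ hne => ?_).symm
      by_contra hle
      exact hne (Finset.sum_eq_zero fun r _ => by simp [hle])
    rw [hF]
    simp only [hl]
    refine Finset.sum_nbij' (fun p => i - p) (fun s => i - s) ?_ ?_ ?_ ?_ ?_ <;>
      simp only [mem_filter, mem_range, Nat.lt_succ_iff]
    · intro p hp; omega
    · intro s hs; omega
    · intro p hp; omega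
    · intro s hs; omega
    · intro p hp
      refine Finset.sum_congr rfl fun q hq => ?_
      rw [mem_range, Nat.lt_succ_iff] at hq
      have h1 : i - k ≤ i - p := Nat.sub_le_sub_left hp i
      have h2 : i - p ≤ i := Nat.sub_le _ _
      by_cases hrs : q + (i - p) ≤ i
      · simp [h1, h2, hrs, hsym (i-p) q]
      · have : i < i - p + q := by omega
        simp [hvan _ _ this, hrs]
  · rw [sum_filter, sum_product]
    rw [← Finset.sum_subset (Finset.range_subset_range.2 (Nat.succ_le_succ hk))
      (fun r _ hr => by
        rw [mem_range, Nat.lt_succ_iff, not_le] at hr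
        exact Finset.sum_eq_zero fun s _ => by simp [Nat.not_le.2 hr, not_and_or])]
    simp only [hl]
    refine Finset.sum_congr rfl fun r hr => Finset.sum_congr rfl fun s hs => ?_
    rw [mem_range, Nat.lt_succ_iff] at hr
    by_cases hrs : r + s ≤ i
    · simp [hr, hrs]
    · simp [hvan r s (not_le.1 hrs), hr, hrs]
end

section
/- Let $i$ and $k$ be natural numbers with $k \le i$, and let $h$ and $\ell$ be as in the context. Then $\sum_{p=0}^{k} \ell(i-p) \le \sum_{p=0}^{k} \ell(p)$. In particular, taking $k=0$, $\ell(i) \le \ell(0)$. -/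
open Finset

/-- Steenbrink's inequality on link invariants (combinatorial core):
`∑_{p=0}^k ℓ(i-p) ≤ ∑_{p=0}^k ℓ(p)`, where `h` models the Deligne–Hodge
numbers of the link (symmetric, vanishing for `p + q > i`) and
`ℓ p = ∑_{q=0}^i h(p,q)` models `ℓ^{p,i-p}`. -/
theorem stmt1 (i k : ℕ) (hk : k ≤ i) (h : ℕ → ℕ → ℕ)
    (hsym : ∀ p q, h p q = h q p)
    (hvan : ∀ p q, i < p + q → h p q = 0)
    (ℓ : ℕ → ℕ) (hl : ∀ p, ℓ p = ∑ q ∈ range (i + 1), h p q) :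
    ∑ p ∈ range (k + 1), ℓ (i - p) ≤ ∑ p ∈ range (k + 1), ℓ p := by
  simp only [hl]
  have key : ∀ p ∈ range (k + 1), ∑ q ∈ range (i + 1), h (i - p) q
      = ∑ q ∈ range (k + 1), h q (i - p) := by
    intro p hp
    rw [mem_range] at hp
    rw [show (∑ q ∈ range (k + 1), h q (i - p))
        = ∑ q ∈ range (k + 1), h (i - p) q from
      Finset.sum_congr rfl fun q _ => hsym q (i - p)]
    apply (Finset.sum_subset (by gcongr <;> omega) ?_).symm
    intro q hq hq'
    rw [mem_range] at hq
    rw [mem_range, not_lt] at hq'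
    exact hvan _ _ (by omega)
  rw [Finset.sum_congr rfl key, Finset.sum_comm]
  apply Finset.sum_le_sum
  intro q _
  have hinj : ∀ a ∈ range (k + 1), ∀ b ∈ range (k + 1),
      (fun p => i - p) a = (fun p => i - p) b → a = b := by
    intro a ha b hb hab; rw [mem_range] at ha hb; simp only at hab; omega
  rw [← Finset.sum_image (s := range (k + 1)) (f := fun b => h q b)
    (g := fun p => i - p) hinj]
  apply Finset.sum_le_sum_of_subset
  intro b hb
  simp only [mem_image, mem_range] at hb ⊢
  obtain ⟨p, hp, rfl⟩ := hb
  omega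
end

section
/- Let $i$ and $k$ be natural numbers with $k \le i$, and let $h$ and $\ell$ be as in the context. Then the following are equivalent: (1) for every natural number $k' \le k$ one has $\sum_{p=0}^{k'} \ell(i-p) = \sum_{p=0}^{k'} \ell(p)$; (2) $h(r,s) = 0$ for all natural numbers $r,s$ with $r \le k$ and $r+s \le i-1$; (3) $\ell(p) = \ell(i-p)$ for all $p \le k$. -/
open Finset

/-- Steenbrink's lemma on link invariants, equality case: the following are
equivalent: (1) the partial sums agree for all `k' ≤ k`; (2) `h(r,s) = 0` for
`r ≤ k` and `r + s ≤ i - 1` (i.e. `r + s < i`); (3) `ℓ(p) = ℓ(i-p)` for all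
`p ≤ k`. -/
theorem stmt2 (i k : ℕ) (hk : k ≤ i) (h : ℕ → ℕ → ℕ)
    (hsym : ∀ p q, h p q = h q p)
    (hvan : ∀ p q, i < p + q → h p q = 0)
    (ℓ : ℕ → ℕ) (hl : ∀ p, ℓ p = ∑ q ∈ range (i + 1), h p q) :
    ((∀ k' ≤ k, ∑ p ∈ range (k' + 1), ℓ (i - p) = ∑ p ∈ range (k' + 1), ℓ p) ↔
      (∀ r s : ℕ, r ≤ k → r + s < i → h r s = 0)) ∧
    ((∀ r s : ℕ, r ≤ k → r + s < i → h r s = 0) ↔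
      (∀ p ≤ k, ℓ p = ℓ (i - p))) := by
  -- Lemma A: for p ≤ i, ℓ p = (∑ s < i-p, h p s) + h p (i-p)
  have ellA : ∀ p ≤ i, ℓ p = (∑ s ∈ range (i - p), h p s) + h p (i - p) := by
    intro p hp
    rw [hl p, ← Finset.sum_range_succ]
    apply (Finset.sum_subset (Finset.range_subset_range.2 (by omega)) ?_).symm
    intro q hq hq'
    simp only [Finset.mem_range] at hq hq'
    exact hvan p q (by omega)
  -- Lemma B: for p ≤ i, ℓ (i-p) = (∑ r < p, h r (i-p)) + h p (i-p)
  have ellB : ∀ p ≤ i, ℓ (i - p) = (∑ r ∈ range p, h r (i - p)) + h p (i - p) := by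
    intro p hp
    rw [hl (i - p)]
    have e1 : ∑ q ∈ range (i + 1), h (i - p) q = ∑ q ∈ range (p + 1), h (i - p) q := by
      apply (Finset.sum_subset (Finset.range_subset_range.2 (by omega)) ?_).symm
      intro q hq hq'
      simp only [Finset.mem_range] at hq hq'
      exact hvan (i - p) q (by omega)
    rw [e1, Finset.sum_range_succ]
    congr 1
    · exact Finset.sum_congr rfl fun r _ => hsym (i - p) r
    · exact hsym (i - p) p
  -- Main identity: S k' = T k' + D k'
  have main : ∀ k' ≤ i, ∑ p ∈ range (k' + 1), ℓ p
      = (∑ p ∈ range (k' + 1), ℓ (i - p))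
        + ∑ p ∈ range (k' + 1), ∑ s ∈ range (i - k'), h p s := by
    intro k' hk'
    induction k' with
    | zero =>
      rw [Finset.sum_range_one, Finset.sum_range_one, Finset.sum_range_one]
      rw [ellA 0 (by omega), ellB 0 (by omega)]
      rw [Finset.range_zero, Finset.sum_empty, zero_add]
      exact Nat.add_comm _ _
    | succ n ih =>
      have hn : n ≤ i := by omega
      rw [Finset.sum_range_succ (f := fun p => ℓ p),
        Finset.sum_range_succ (f := fun p => ℓ (i - p)), ih hn]
      -- reduce to: D n + ℓ (n+1) = ℓ (i-(n+1)) + D (n+1)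
      have key : (∑ p ∈ range (n + 1), ∑ s ∈ range (i - n), h p s) + ℓ (n + 1)
          = ℓ (i - (n + 1)) + ∑ p ∈ range (n + 1 + 1), ∑ s ∈ range (i - (n + 1)), h p s := by
        have hsplit : ∀ p, ∑ s ∈ range (i - n), h p s
            = (∑ s ∈ range (i - (n + 1)), h p s) + h p (i - (n + 1)) := by
          intro p
          have : i - n = (i - (n + 1)) + 1 := by omega
          rw [this, Finset.sum_range_succ]
        have e2 : ∑ p ∈ range (n + 1 + 1), ∑ s ∈ range (i - (n + 1)), h p s
            = (∑ p ∈ range (n + 1), ∑ s ∈ range (i - (n + 1)), h p s)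
              + ∑ s ∈ range (i - (n + 1)), h (n + 1) s :=
          Finset.sum_range_succ _ _
        rw [ellA (n + 1) (by omega), ellB (n + 1) (by omega), e2,
          Finset.sum_congr rfl (fun p _ => hsplit p), Finset.sum_add_distrib]
        ring
      rw [add_assoc, key, ← add_assoc]
  -- the three conditions
  have h12 : (∀ k' ≤ k, ∑ p ∈ range (k' + 1), ℓ (i - p) = ∑ p ∈ range (k' + 1), ℓ p) →
      (∀ r s : ℕ, r ≤ k → r + s < i → h r s = 0) := by
    intro H r s hr hrs
    have hri : r ≤ i := by omega
    have := main r hri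
    rw [← H r hr] at this
    have hD : ∑ p ∈ range (r + 1), ∑ s ∈ range (i - r), h p s = 0 :=
      (left_eq_add.mp this)
    have := Finset.sum_eq_zero_iff.1 hD r (Finset.mem_range.2 (by omega))
    exact Finset.sum_eq_zero_iff.1 this s (Finset.mem_range.2 (by omega))
  have h23 : (∀ r s : ℕ, r ≤ k → r + s < i → h r s = 0) →
      (∀ p ≤ k, ℓ p = ℓ (i - p)) := by
    intro H p hp
    rw [ellA p (by omega), ellB p (by omega)]
    have e1 : ∑ s ∈ range (i - p), h p s = 0 :=
      Finset.sum_eq_zero fun s hs =>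
        H p s hp (by simp only [Finset.mem_range] at hs; omega)
    have e2 : ∑ r ∈ range p, h r (i - p) = 0 :=
      Finset.sum_eq_zero fun r hr =>
        H r (i - p) (by simp only [Finset.mem_range] at hr; omega)
          (by simp only [Finset.mem_range] at hr; omega)
    rw [e1, e2]
  have h31 : (∀ p ≤ k, ℓ p = ℓ (i - p)) →
      (∀ k' ≤ k, ∑ p ∈ range (k' + 1), ℓ (i - p) = ∑ p ∈ range (k' + 1), ℓ p) := by
    intro H k' hk'
    refine Finset.sum_congr rfl fun p hp => ?_
    exact (H p (by simp only [Finset.mem_range] at hp; omega)).symm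
  exact ⟨⟨h12, fun H => h31 (h23 H)⟩, ⟨h23, fun H => h12 (h31 H)⟩⟩
end

section
/- Let $n \ge 1$ and let $k$ be a natural number with $k \le n-1$. Let $h : \mathbb{N} \times \mathbb{N} \to \mathbb{N}$ satisfy $h(p,q) = h(q,p)$ for all $p,q$ and $h(p,q) = 0$ whenever $p+q > n-1$, and set $\ell(p) = \sum_{q=0}^{n-1} h(p,q)$. Let $s : \mathbb{N} \to \mathbb{N}$ be a function such that, as integers, $s(n-p) - s(p) = \ell(p) - \ell(n-p)$ for every $p$ with $0 \le p \le k$. Then $\sum_{p=0}^{k} s(p) \le \sum_{p=0}^{k} s(n-p)$, and if equality holds then $\ell(n-k-1) = 0$. -/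
open Finset

/-- Arithmetic skeleton of Proposition 2.11: for an isolated lci singularity of
dimension `n`, with `h` modelling the Deligne–Hodge numbers of `H^{n-1}(L)`
(symmetric, vanishing for `p + q > n - 1`), `ℓ p = ∑_{q=0}^{n-1} h(p,q)` the
link invariants, and `s` satisfying `s(n-p) - s(p) = ℓ(p) - ℓ(n-p)` for
`p ≤ k`, we get `∑_{p=0}^k s(p) ≤ ∑_{p=0}^k s(n-p)`, with `ℓ(n-k-1) = 0` in the
equality case. -/
theorem stmt3 (n k : ℕ) (hn : 1 ≤ n) (hk : k ≤ n - 1)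
    (h : ℕ → ℕ → ℕ) (hsym : ∀ p q, h p q = h q p)
    (hvan : ∀ p q, n - 1 < p + q → h p q = 0)
    (ℓ : ℕ → ℕ) (hl : ∀ p, ℓ p = ∑ q ∈ range n, h p q)
    (s : ℕ → ℕ)
    (hs : ∀ p ≤ k, (s (n - p) : ℤ) - (s p : ℤ) = (ℓ p : ℤ) - (ℓ (n - p) : ℤ)) :
    (∑ p ∈ range (k + 1), s p ≤ ∑ p ∈ range (k + 1), s (n - p)) ∧
    (∑ p ∈ range (k + 1), s p = ∑ p ∈ range (k + 1), s (n - p) →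
      ℓ (n - k - 1) = 0) := by
  have hkn : k + 1 ≤ n := by omega
  -- For p ≤ k+1, ℓ (n - p) = ∑_{q < p} h q (n - p) (terms with q ≥ p vanish).
  have hlnp : ∀ p ≤ k + 1, ℓ (n - p) = ∑ q ∈ range p, h q (n - p) := by
    intro p hp
    rw [hl]
    rw [← Finset.sum_subset (Finset.range_subset_range.mpr (le_trans hp hkn))
        (fun q hq hq' => hvan (n - p) q (by
          simp only [Finset.mem_range] at hq hq'; omega))]
    exact Finset.sum_congr rfl fun q _ => hsym _ _
  -- Key combinatorial inequality.
  have key : (∑ p ∈ range (k + 1), ℓ (n - p)) + ℓ (n - k - 1) ≤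
      ∑ p ∈ range (k + 1), ℓ p := by
    have e1 : ℓ (n - k - 1) = ∑ q ∈ range (k + 1), h q (n - (k + 1)) := by
      rw [show n - k - 1 = n - (k + 1) by omega]
      exact hlnp (k + 1) le_rfl
    have e2 : ∀ p ∈ range (k + 1),
        ℓ (n - p) = ∑ q ∈ range (k + 1), if q < p then h q (n - p) else 0 := by
      intro p hp
      simp only [Finset.mem_range] at hp
      rw [hlnp p (by omega), ← Finset.sum_filter]
      congr 1
      ext q
      simp only [Finset.mem_range, Finset.mem_filter]
      omega
    rw [e1]
    calc (∑ p ∈ range (k + 1), ℓ (n - p)) + ∑ q ∈ range (k + 1), h q (n - (k + 1))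
        = ∑ q ∈ range (k + 1),
            ((∑ p ∈ range (k + 1), if q < p then h q (n - p) else 0)
              + h q (n - (k + 1))) := by
          rw [Finset.sum_add_distrib]
          congr 1
          rw [Finset.sum_congr rfl e2, Finset.sum_comm]
      _ ≤ ∑ q ∈ range (k + 1), ℓ q := by
          apply Finset.sum_le_sum
          intro q hq
          simp only [Finset.mem_range] at hq
          have hq' : q ≤ k := by omega
          have e3 : (∑ p ∈ range (k + 1), if q < p then h q (n - p) else 0)
              + h q (n - (k + 1)) = ∑ p ∈ Finset.Ioc q (k + 1), h q (n - p) := by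
            rw [← Finset.sum_filter]
            have hfil : Finset.filter (fun p => q < p) (range (k + 1))
                = Finset.Ioc q k := by
              ext p
              simp only [Finset.mem_range, Finset.mem_filter, Finset.mem_Ioc]
              omega
            rw [hfil]
            exact (Finset.sum_Ioc_succ_top (by omega) _).symm
          rw [e3, hl]
          have hinj : ∀ a ∈ Finset.Ioc q (k + 1), ∀ b ∈ Finset.Ioc q (k + 1),
              n - a = n - b → a = b := by
            intro a ha b hb hab
            simp only [Finset.mem_Ioc] at ha hb
            omega
          calc ∑ p ∈ Finset.Ioc q (k + 1), h q (n - p)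
              = ∑ r ∈ (Finset.Ioc q (k + 1)).image (fun p => n - p), h q r :=
                (Finset.sum_image hinj).symm
            _ ≤ ∑ r ∈ range n, h q r := by
                apply Finset.sum_le_sum_of_subset
                intro r hr
                simp only [Finset.mem_image, Finset.mem_Ioc] at hr
                simp only [Finset.mem_range]
                omega
  -- Sum the hypothesis hs over p ≤ k.
  have hsum : ((∑ p ∈ range (k + 1), s (n - p) : ℕ) : ℤ)
      - ((∑ p ∈ range (k + 1), s p : ℕ) : ℤ)
      = ((∑ p ∈ range (k + 1), ℓ p : ℕ) : ℤ)
        - ((∑ p ∈ range (k + 1), ℓ (n - p) : ℕ) : ℤ) := by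
    push_cast
    rw [← Finset.sum_sub_distrib, ← Finset.sum_sub_distrib]
    apply Finset.sum_congr rfl
    intro p hp
    simp only [Finset.mem_range] at hp
    exact hs p (by omega)
  constructor
  · omega
  · intro heq
    omega
end

section
/- Let $n \ge 1$ and let $k$ be a natural number with $k \le n$. Let $h : \mathbb{N} \times \mathbb{N} \to \mathbb{N}$ satisfy $h(p,q) = h(q,p)$ for all $p,q$ and $h(p,q) = 0$ whenever $p+q > n$, and set $\ell(p) = \sum_{q=0}^{n} h(p,q)$. Let $s : \mathbb{N} \to \mathbb{N}$ be a function with $s(n+1) = 0$ such that, as integers, $s(p) - s(n-p+1) = \ell(p) - \ell(n-p+1)$ for every $p$ with $0 \le p \le k$. Then $\sum_{p=0}^{k-1} s(n-p) \le \sum_{p=0}^{k} s(p)$, and if equality holds then $\ell(n-k) = 0$. -/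
open Finset

/-- Arithmetic skeleton of Corollary 4.3: with `h` modelling the Deligne–Hodge
numbers of `H^n(𝓛)` for the link `𝓛` of a semistable smoothing (symmetric,
vanishing for `p + q > n`), `ℓ p = ∑_{q=0}^{n} h(p,q)`, and `s` satisfying
`s(n+1) = 0` and `s(p) - s(n-p+1) = ℓ(p) - ℓ(n-p+1)` for `p ≤ k`, we get
`∑_{p=0}^{k-1} s(n-p) ≤ ∑_{p=0}^{k} s(p)`, with `ℓ(n-k) = 0` in the equality
case. -/
theorem stmt4 (n k : ℕ) (hn : 1 ≤ n) (hk : k ≤ n)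
    (h : ℕ → ℕ → ℕ) (hsym : ∀ p q, h p q = h q p)
    (hvan : ∀ p q, n < p + q → h p q = 0)
    (ℓ : ℕ → ℕ) (hl : ∀ p, ℓ p = ∑ q ∈ range (n + 1), h p q)
    (s : ℕ → ℕ) (hs0 : s (n + 1) = 0)
    (hs : ∀ p ≤ k, (s p : ℤ) - (s (n - p + 1) : ℤ) = (ℓ p : ℤ) - (ℓ (n - p + 1) : ℤ)) :
    (∑ p ∈ range k, s (n - p) ≤ ∑ p ∈ range (k + 1), s p) ∧
    (∑ p ∈ range k, s (n - p) = ∑ p ∈ range (k + 1), s p → ℓ (n - k) = 0) := by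
  classical
  set A : Finset (ℕ × ℕ) := range (k+1) ×ˢ range (n+1) with hA
  set S : Finset (ℕ × ℕ) := A.filter (fun x => n - k < x.2 ∧ x.1 + x.2 ≤ n) with hSdef
  set C : Finset (ℕ × ℕ) := A.filter (fun x => x.2 = n - k ∧ x.1 + x.2 ≤ n) with hCdef
  have hL1 : ∑ p ∈ range (k+1), ℓ (n - p + 1) = ∑ x ∈ S, h x.1 x.2 := by
    calc ∑ p ∈ range (k+1), ℓ (n - p + 1)
        = ∑ x ∈ A, h (n - x.1 + 1) x.2 := by
          simp only [hl]; rw [hA, Finset.sum_product]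
      _ = ∑ x ∈ A.filter (fun x => x.2 < x.1), h (n - x.1 + 1) x.2 := by
          rw [Finset.sum_filter_of_ne]
          intro x hx hne
          simp only [hA, Finset.mem_product, Finset.mem_range] at hx
          by_contra hlt
          exact hne (hvan _ _ (by omega))
      _ = ∑ x ∈ S, h x.1 x.2 := by
          apply Finset.sum_nbij' (fun x => (x.2, n - x.1 + 1)) (fun x => (n + 1 - x.2, x.1))
          · intro x hx
            simp only [Finset.mem_filter, hA, Finset.mem_product, Finset.mem_range] at hx
            simp only [hSdef, Finset.mem_filter, hA, Finset.mem_product, Finset.mem_range]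
            omega
          · intro x hx
            simp only [hSdef, Finset.mem_filter, hA, Finset.mem_product, Finset.mem_range] at hx
            simp only [Finset.mem_filter, hA, Finset.mem_product, Finset.mem_range]
            omega
          · intro x hx
            simp only [Finset.mem_filter, hA, Finset.mem_product, Finset.mem_range] at hx
            ext <;> simp <;> omega
          · intro x hx
            simp only [hSdef, Finset.mem_filter, hA, Finset.mem_product, Finset.mem_range] at hx
            ext <;> simp <;> omega
          · intro x hx
            exact (hsym _ _)
  have hLC : ℓ (n - k) = ∑ x ∈ C, h x.1 x.2 := by
    calc ℓ (n - k) = ∑ q ∈ range (n+1), h (n-k) q := hl _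
      _ = ∑ q ∈ (range (n+1)).filter (fun q => (n-k) + q ≤ n), h (n-k) q := by
          rw [Finset.sum_filter_of_ne]
          intro q hq hne
          by_contra hlt
          exact hne (hvan _ _ (by omega))
      _ = ∑ x ∈ C, h x.1 x.2 := by
          apply Finset.sum_nbij' (fun q => (q, n - k)) (fun x => x.1)
          · intro q hq
            simp only [Finset.mem_filter, Finset.mem_range] at hq
            simp only [hCdef, Finset.mem_filter, hA, Finset.mem_product, Finset.mem_range]
            exact ⟨⟨by omega, by omega⟩, trivial, by omega⟩
          · intro x hx
            simp only [hCdef, Finset.mem_filter, hA, Finset.mem_product, Finset.mem_range] at hx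
            simp only [Finset.mem_filter, Finset.mem_range]
            omega
          · intro q hq; rfl
          · intro x hx
            simp only [hCdef, Finset.mem_filter, hA, Finset.mem_product, Finset.mem_range] at hx
            ext <;> simp <;> omega
          · intro q hq
            exact hsym _ _
  have hdisj : Disjoint S C := by
    rw [Finset.disjoint_left]
    intro x hxS hxC
    simp only [hSdef, Finset.mem_filter] at hxS
    simp only [hCdef, Finset.mem_filter] at hxC
    omega
  have hineq : ∑ p ∈ range (k+1), ℓ (n - p + 1) + ℓ (n - k) ≤ ∑ p ∈ range (k+1), ℓ p := by
    rw [hL1, hLC, ← Finset.sum_union hdisj]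
    have hRA : ∑ p ∈ range (k+1), ℓ p = ∑ x ∈ A, h x.1 x.2 := by
      simp only [hl]; rw [hA, Finset.sum_product]
    rw [hRA]
    apply Finset.sum_le_sum_of_subset
    exact Finset.union_subset (Finset.filter_subset _ _) (Finset.filter_subset _ _)
  -- step 1: relate s-sums to ℓ-sums
  have h1 : ∑ p ∈ range (k+1), ((s p : ℤ) - (s (n - p + 1) : ℤ))
      = ∑ p ∈ range (k+1), ((ℓ p : ℤ) - (ℓ (n - p + 1) : ℤ)) :=
    Finset.sum_congr rfl fun p hp => hs p (by
      have := Finset.mem_range.mp hp; omega)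
  have h2 : ∑ p ∈ range (k+1), (s (n - p + 1) : ℤ) = ∑ p ∈ range k, (s (n - p) : ℤ) := by
    rw [Finset.sum_range_succ']
    have : ∀ p ∈ range k, (s (n - (p + 1) + 1) : ℤ) = (s (n - p) : ℤ) := by
      intro p hp
      have := Finset.mem_range.mp hp
      congr 2
      omega
    rw [Finset.sum_congr rfl this]
    simp [hs0]
  have hfin : ((∑ p ∈ range k, s (n - p) : ℕ) : ℤ) + (ℓ (n - k) : ℤ)
      ≤ ((∑ p ∈ range (k+1), s p : ℕ) : ℤ) := by
    have e1 : ∑ p ∈ range (k+1), ((s p : ℤ) - (s (n - p + 1) : ℤ))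
        = ∑ p ∈ range (k+1), (s p : ℤ) - ∑ p ∈ range k, (s (n - p) : ℤ) := by
      rw [Finset.sum_sub_distrib, h2]
    have e2 : ∑ p ∈ range (k+1), ((ℓ p : ℤ) - (ℓ (n - p + 1) : ℤ))
        = ∑ p ∈ range (k+1), (ℓ p : ℤ) - ∑ p ∈ range (k+1), (ℓ (n - p + 1) : ℤ) := by
      rw [Finset.sum_sub_distrib]
    have e3 : (∑ p ∈ range (k+1), ℓ (n - p + 1) : ℤ) + (ℓ (n - k) : ℤ)
        ≤ (∑ p ∈ range (k+1), ℓ p : ℤ) := by exact_mod_cast hineq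
    push_cast at e3 ⊢
    rw [e1, e2] at h1
    linarith
  constructor
  · exact_mod_cast le_trans (le_add_of_nonneg_right (Int.natCast_nonneg _)) hfin
  · intro heq
    rw [heq] at hfin
    omega
end

section
/- Let $n \ge 1$ and let $k$ be a natural number with $k \le n$ and $2k \ge n$. Let $h : \mathbb{N} \times \mathbb{N} \to \mathbb{N}$ satisfy $h(p,q) = h(q,p)$ for all $p,q$ and $h(p,q) = 0$ whenever $p+q > n$, and set $\ell(p) = \sum_{q=0}^{n} h(p,q)$. Let $s : \mathbb{N} \to \mathbb{N}$ be a function with $s(n+1) = 0$ such that, as integers, $s(p) - s(n-p+1) = \ell(p) - \ell(n-p+1)$ for every $p$ with $0 \le p \le k$. If $s(p) = 0$ for every $p \le k$, then $s(p) = 0$ for every $p \le n+1$. -/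
open Finset

/-- Arithmetic skeleton of Corollary 4.4: in the setting of Corollary 4.3
(semistable smoothing of an isolated lci singularity of dimension `n`), if
`2k ≥ n` and `s(p) = 0` for all `p ≤ k`, then `s(p) = 0` for all `p ≤ n + 1`
(so the Milnor number vanishes and `X` is smooth). -/
theorem stmt5 (n k : ℕ) (hn : 1 ≤ n) (hk : k ≤ n) (hk2 : n ≤ 2 * k)
    (h : ℕ → ℕ → ℕ) (hsym : ∀ p q, h p q = h q p)
    (hvan : ∀ p q, n < p + q → h p q = 0)
    (ℓ : ℕ → ℕ) (hl : ∀ p, ℓ p = ∑ q ∈ range (n + 1), h p q)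
    (s : ℕ → ℕ) (hs0 : s (n + 1) = 0)
    (hs : ∀ p ≤ k, (s p : ℤ) - (s (n - p + 1) : ℤ) = (ℓ p : ℤ) - (ℓ (n - p + 1) : ℤ))
    (hzero : ∀ p ≤ k, s p = 0) :
    ∀ p ≤ n + 1, s p = 0 := by
  -- the key ℕ inequality ∑ ℓ(n-p+1) ≤ ∑ ℓ(p)
  have hnat : (∑ p ∈ range (k+1), ℓ (n - p + 1)) ≤ ∑ p ∈ range (k+1), ℓ p := by
    have hB : (∑ p ∈ range (k+1), ℓ (n - p + 1))
        = ∑ x ∈ ((range (k+1) ×ˢ range (n+1)).filter fun x => x.2 < x.1),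
            h (n - x.1 + 1) x.2 := by
      rw [Finset.sum_filter_of_ne]
      · rw [Finset.sum_product]
        exact Finset.sum_congr rfl fun p _ => hl (n - p + 1)
      · rintro ⟨p, q⟩ hx hne
        simp only [Finset.mem_product, Finset.mem_range] at hx
        by_contra hc
        push_neg at hc
        exact hne (hvan _ _ (by omega))
    have hA : (∑ p ∈ range (k+1), ℓ p)
        = ∑ x ∈ (range (k+1) ×ˢ range (n+1)), h x.1 x.2 := by
      rw [Finset.sum_product]
      exact Finset.sum_congr rfl fun p _ => hl p
    rw [hA, hB]
    have himg : ∑ x ∈ ((range (k+1) ×ˢ range (n+1)).filter fun x => x.2 < x.1),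
          h (n - x.1 + 1) x.2
        = ∑ y ∈ (((range (k+1) ×ˢ range (n+1)).filter fun x => x.2 < x.1).image
            fun x => (x.2, n - x.1 + 1)), h y.1 y.2 := by
      rw [Finset.sum_image]
      · exact Finset.sum_congr rfl fun x _ => by rw [hsym]
      · rintro ⟨p, q⟩ hx ⟨p', q'⟩ hx' he
        simp only [Finset.mem_coe, Finset.mem_filter, Finset.mem_product, Finset.mem_range] at hx hx'
        simp only [Prod.mk.injEq] at he
        have : p = p' := by omega
        exact Prod.ext this he.1
    rw [himg]
    apply Finset.sum_le_sum_of_subset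
    intro y hy
    simp only [Finset.mem_image, Finset.mem_filter, Finset.mem_product,
      Finset.mem_range] at hy ⊢
    obtain ⟨⟨p, q⟩, ⟨⟨hp, hq⟩, hlt⟩, rfl⟩ := hy
    constructor <;> omega
  -- hence each s (n - p + 1) vanishes for p ≤ k
  have key : ∀ p ∈ range (k+1), s (n - p + 1) = 0 := by
    have h1 : (∑ p ∈ range (k+1), (s (n - p + 1) : ℤ))
        = ∑ p ∈ range (k+1), ((ℓ (n - p + 1) : ℤ) - ℓ p + s p) := by
      apply Finset.sum_congr rfl
      intro p hp
      have := hs p (by simpa [Nat.lt_succ_iff] using hp)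
      linarith
    have h2 : (∑ p ∈ range (k+1), ((ℓ (n - p + 1) : ℤ) - ℓ p + s p)) ≤ 0 := by
      have hz : ∑ p ∈ range (k+1), (s p : ℤ) = 0 := by
        apply Finset.sum_eq_zero
        intro p hp
        simp [hzero p (by simpa [Nat.lt_succ_iff] using hp)]
      rw [Finset.sum_add_distrib, Finset.sum_sub_distrib, hz]
      have : (∑ p ∈ range (k+1), (ℓ (n - p + 1) : ℤ)) ≤ ∑ p ∈ range (k+1), (ℓ p : ℤ) := by
        exact_mod_cast hnat
      linarith
    have h3 : (∑ p ∈ range (k+1), (s (n - p + 1) : ℤ)) = 0 := by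
      have h4 : (0:ℤ) ≤ ∑ p ∈ range (k+1), (s (n - p + 1) : ℤ) :=
        Finset.sum_nonneg fun p _ => Int.natCast_nonneg _
      omega
    have h5 : (∑ p ∈ range (k+1), s (n - p + 1)) = 0 := by exact_mod_cast h3
    intro p hp
    exact (Finset.sum_eq_zero_iff.mp h5) p hp
  intro p hp
  by_cases hpk : p ≤ k
  · exact hzero p hpk
  rcases Nat.lt_or_ge p (n+1) with hpl | hpe
  · have hj : n - p + 1 ∈ range (k+1) := by
      simp only [Finset.mem_range]; omega
    have := key (n - p + 1) hj
    have hpe : n - (n - p + 1) + 1 = p := by omega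
    rwa [hpe] at this
  · have : p = n + 1 := by omega
    rw [this]; exact hs0
end

section
/- Let $n \ge 2$ and let $k$ be a natural number with $k \le n-1$. Let $h_1, h_2 : \mathbb{N} \times \mathbb{N} \to \mathbb{N}$ be symmetric functions ($h_j(p,q) = h_j(q,p)$) with $h_1(p,q) = 0$ whenever $p+q > n-1$ and $h_2(p,q) = 0$ whenever $p+q > n$; set $\ell_1(p) = \sum_{q=0}^{n-1} h_1(p,q)$ and $\ell_2(p) = \sum_{q=0}^{n} h_2(p,q)$. Let $s : \mathbb{N} \to \mathbb{N}$ be a function with $s(n+1) = 0$ such that, as integers, for every $p$ with $0 \le p \le k$: $s(n-p) - s(p) = \ell_1(p) - \ell_1(n-p)$ and $s(p) - s(n-p+1) = \ell_2(p) - \ell_2(n-p+1)$. Then $\sum_{p=0}^{k-1} s(n-p) \le \sum_{p=0}^{k} s(p) \le \sum_{p=0}^{k} s(n-p)$. -/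
open Finset

/-- Reflection inequality: for a symmetric `h` vanishing when `p + q > m`,
the sum of `ℓ(m+1-p) = ∑_q h (m+1-p) q` over `p ≤ k ≤ m` is at most the sum
of `ℓ(p)`. -/
lemma stmt6_aux (m k : ℕ) (hk : k ≤ m) (h : ℕ → ℕ → ℕ)
    (hsym : ∀ p q, h p q = h q p)
    (hvan : ∀ p q, m < p + q → h p q = 0) :
    ∑ p ∈ range (k + 1), ∑ q ∈ range (m + 1), h (m + 1 - p) q ≤
      ∑ p ∈ range (k + 1), ∑ q ∈ range (m + 1), h p q := by
  classical
  rw [← Finset.sum_product', ← Finset.sum_product']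
  set A : Finset (ℕ × ℕ) := range (k + 1) ×ˢ range (m + 1) with hA
  set B : Finset (ℕ × ℕ) := A.filter (fun x => x.2 < x.1) with hB
  have hBA : B ⊆ A := Finset.filter_subset _ _
  have h1 : ∑ x ∈ A, h (m + 1 - x.1) x.2 = ∑ x ∈ B, h (m + 1 - x.1) x.2 := by
    refine (Finset.sum_subset hBA ?_).symm
    intro x hxA hxB
    have hx1 : x.1 < k + 1 := (Finset.mem_range.mp (Finset.mem_product.mp hxA).1)
    have : ¬ x.2 < x.1 := by
      intro hc
      exact hxB (Finset.mem_filter.mpr ⟨hxA, hc⟩)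
    exact hvan _ _ (by omega)
  have hinj : Set.InjOn (fun x : ℕ × ℕ => (x.2, m + 1 - x.1)) B := by
    intro x hx y hy hxy
    simp only [hB, hA, Finset.coe_filter, Set.mem_setOf_eq, Finset.mem_product,
      Finset.mem_range] at hx hy
    have e1 : x.2 = y.2 := congrArg Prod.fst hxy
    have e2 : m + 1 - x.1 = m + 1 - y.1 := congrArg Prod.snd hxy
    have hx1 : x.1 < k + 1 := hx.1.1
    have hy1 : y.1 < k + 1 := hy.1.1
    have : x.1 = y.1 := by omega
    exact Prod.ext this e1
  have h2 : ∑ x ∈ B, h (m + 1 - x.1) x.2 =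
      ∑ x ∈ B.image (fun x : ℕ × ℕ => (x.2, m + 1 - x.1)), h x.1 x.2 := by
    rw [Finset.sum_image hinj]
    exact Finset.sum_congr rfl (fun x hx => (hsym _ _).symm)
  have hsub : B.image (fun x : ℕ × ℕ => (x.2, m + 1 - x.1)) ⊆ A := by
    intro y hy
    obtain ⟨x, hx, rfl⟩ := Finset.mem_image.mp hy
    simp only [hB, Finset.mem_filter, hA, Finset.mem_product, Finset.mem_range] at hx ⊢
    omega
  calc ∑ x ∈ A, h (m + 1 - x.1) x.2
      = ∑ x ∈ B.image (fun x : ℕ × ℕ => (x.2, m + 1 - x.1)), h x.1 x.2 := by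
        rw [h1, h2]
    _ ≤ ∑ x ∈ A, h x.1 x.2 := Finset.sum_le_sum_of_subset hsub

/-- Arithmetic skeleton of Theorem 1.10: for an isolated lci singularity of
dimension `n` with Milnor fiber Hodge numbers `s p`, link Deligne–Hodge
numbers `h₁` (for `H^{n-1}(L)`, symmetric, vanishing for `p + q > n - 1`) and
`h₂` (for `H^n(𝓛)` of a semistable smoothing, symmetric, vanishing for
`p + q > n`), one has `∑_{p=0}^{k-1} s(n-p) ≤ ∑_{p=0}^{k} s(p) ≤
∑_{p=0}^{k} s(n-p)`. -/
theorem stmt6 (n k : ℕ) (hn : 2 ≤ n) (hk : k ≤ n - 1)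
    (h₁ h₂ : ℕ → ℕ → ℕ)
    (hsym₁ : ∀ p q, h₁ p q = h₁ q p)
    (hsym₂ : ∀ p q, h₂ p q = h₂ q p)
    (hvan₁ : ∀ p q, n - 1 < p + q → h₁ p q = 0)
    (hvan₂ : ∀ p q, n < p + q → h₂ p q = 0)
    (ℓ₁ ℓ₂ : ℕ → ℕ)
    (hl₁ : ∀ p, ℓ₁ p = ∑ q ∈ range n, h₁ p q)
    (hl₂ : ∀ p, ℓ₂ p = ∑ q ∈ range (n + 1), h₂ p q)
    (s : ℕ → ℕ) (hs0 : s (n + 1) = 0)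
    (hs₁ : ∀ p ≤ k, (s (n - p) : ℤ) - (s p : ℤ) = (ℓ₁ p : ℤ) - (ℓ₁ (n - p) : ℤ))
    (hs₂ : ∀ p ≤ k, (s p : ℤ) - (s (n - p + 1) : ℤ) = (ℓ₂ p : ℤ) - (ℓ₂ (n - p + 1) : ℤ)) :
    (∑ p ∈ range k, s (n - p) ≤ ∑ p ∈ range (k + 1), s p) ∧
    (∑ p ∈ range (k + 1), s p ≤ ∑ p ∈ range (k + 1), s (n - p)) := by
  have hn1 : n - 1 + 1 = n := by omega
  -- First ℓ₁ inequality
  have aux1 : ∑ p ∈ range (k + 1), ℓ₁ (n - p) ≤ ∑ p ∈ range (k + 1), ℓ₁ p := by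
    have := stmt6_aux (n - 1) k hk h₁ hsym₁ hvan₁
    rw [hn1] at this
    calc ∑ p ∈ range (k + 1), ℓ₁ (n - p)
        = ∑ p ∈ range (k + 1), ∑ q ∈ range n, h₁ (n - p) q := by
          exact Finset.sum_congr rfl (fun p hp => hl₁ _)
      _ ≤ ∑ p ∈ range (k + 1), ∑ q ∈ range n, h₁ p q := this
      _ = ∑ p ∈ range (k + 1), ℓ₁ p := by
          exact Finset.sum_congr rfl (fun p hp => (hl₁ _).symm)
  -- Second ℓ₂ inequality
  have aux2 : ∑ p ∈ range (k + 1), ℓ₂ (n - p + 1) ≤ ∑ p ∈ range (k + 1), ℓ₂ p := by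
    have h := stmt6_aux n k (by omega) h₂ hsym₂ hvan₂
    calc ∑ p ∈ range (k + 1), ℓ₂ (n - p + 1)
        = ∑ p ∈ range (k + 1), ∑ q ∈ range (n + 1), h₂ (n + 1 - p) q := by
          refine Finset.sum_congr rfl (fun p hp => ?_)
          have hpk : p < k + 1 := Finset.mem_range.mp hp
          have : n - p + 1 = n + 1 - p := by omega
          rw [this, hl₂]
      _ ≤ ∑ p ∈ range (k + 1), ∑ q ∈ range (n + 1), h₂ p q := h
      _ = ∑ p ∈ range (k + 1), ℓ₂ p := by
          exact Finset.sum_congr rfl (fun p hp => (hl₂ _).symm)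
  -- sums of the MHS identities
  have e1 : (∑ p ∈ range (k + 1), (s (n - p) : ℤ)) - ∑ p ∈ range (k + 1), (s p : ℤ)
      = (∑ p ∈ range (k + 1), (ℓ₁ p : ℤ)) - ∑ p ∈ range (k + 1), (ℓ₁ (n - p) : ℤ) := by
    rw [← Finset.sum_sub_distrib, ← Finset.sum_sub_distrib]
    exact Finset.sum_congr rfl (fun p hp => hs₁ p (Nat.lt_succ_iff.mp (Finset.mem_range.mp hp)))
  have e2 : (∑ p ∈ range (k + 1), (s p : ℤ)) - ∑ p ∈ range (k + 1), (s (n - p + 1) : ℤ)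
      = (∑ p ∈ range (k + 1), (ℓ₂ p : ℤ)) - ∑ p ∈ range (k + 1), (ℓ₂ (n - p + 1) : ℤ) := by
    rw [← Finset.sum_sub_distrib, ← Finset.sum_sub_distrib]
    exact Finset.sum_congr rfl (fun p hp => hs₂ p (Nat.lt_succ_iff.mp (Finset.mem_range.mp hp)))
  -- rewrite the shifted s-sum
  have e3 : ∑ p ∈ range (k + 1), s (n - p + 1) = ∑ p ∈ range k, s (n - p) := by
    rw [Finset.sum_range_succ']
    have : ∀ p ∈ range k, s (n - (p + 1) + 1) = s (n - p) := by
      intro p hp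
      have hpk : p < k := Finset.mem_range.mp hp
      congr 1
      omega
    rw [Finset.sum_congr rfl this]
    simp [Nat.sub_zero, hs0]
  -- pass to ℤ and conclude
  have c1 : ((∑ p ∈ range (k + 1), ℓ₁ (n - p) : ℕ) : ℤ) ≤ ((∑ p ∈ range (k + 1), ℓ₁ p : ℕ) : ℤ) :=
    Int.ofNat_le.mpr aux1
  have c2 : ((∑ p ∈ range (k + 1), ℓ₂ (n - p + 1) : ℕ) : ℤ) ≤ ((∑ p ∈ range (k + 1), ℓ₂ p : ℕ) : ℤ) :=
    Int.ofNat_le.mpr aux2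
  push_cast at c1 c2
  constructor
  · have : (∑ p ∈ range (k + 1), (s (n - p + 1) : ℤ)) ≤ ∑ p ∈ range (k + 1), (s p : ℤ) := by
      linarith
    have e3' : (∑ p ∈ range (k + 1), (s (n - p + 1) : ℤ)) = ∑ p ∈ range k, (s (n - p) : ℤ) := by
      have := congrArg (Nat.cast (R := ℤ)) e3
      push_cast at this
      exact this
    rw [e3'] at this
    have := this
    -- convert back to ℕ
    have h4 : ((∑ p ∈ range k, s (n - p) : ℕ) : ℤ) ≤ ((∑ p ∈ range (k + 1), s p : ℕ) : ℤ) := by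
      push_cast
      exact this
    exact_mod_cast h4
  · have : (∑ p ∈ range (k + 1), (s p : ℤ)) ≤ ∑ p ∈ range (k + 1), (s (n - p) : ℤ) := by
      linarith
    have h4 : ((∑ p ∈ range (k + 1), s p : ℕ) : ℤ) ≤ ((∑ p ∈ range (k + 1), s (n - p) : ℕ) : ℤ) := by
      push_cast
      exact this
    exact_mod_cast h4
end
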